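/- arXiv:math/0607169 — 3 statements merged into one kernel-verified Lean document; each statement's English description precedes it below -/
import Mathlib

section
/- Every integer r with 0 ≤ r < 370944 can be written as r = 84480·r₅ + 4830·r₄ + 252·r₃ - 24·r₂ - r₁ with integers 0 ≤ r₅ ≤ 4, 0 ≤ r₄ ≤ 17, 0 ≤ r₃ ≤ 20, 0 ≤ r₂ ≤ 11, 0 ≤ r₁ ≤ 23, and consequently r₅ + r₄ + r₃ + r₂ + r₁ ≤ 75. -/
theorem digit_representation (r : ℤ) (h0 : 0 ≤ r) (h1 : r < 370944) :
    ∃ r₅ r₄ r₃ r₂ r₁ : ℤ,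
      0 ≤ r₅ ∧ r₅ ≤ 4 ∧ 0 ≤ r₄ ∧ r₄ ≤ 17 ∧ 0 ≤ r₃ ∧ r₃ ≤ 20 ∧
      0 ≤ r₂ ∧ r₂ ≤ 11 ∧ 0 ≤ r₁ ∧ r₁ ≤ 23 ∧
      r = 84480 * r₅ + 4830 * r₄ + 252 * r₃ - 24 * r₂ - r₁ ∧
      r₅ + r₄ + r₃ + r₂ + r₁ ≤ 75 := by
  refine ⟨r / 84480, r % 84480 / 4830, (r % 84480 % 4830 + 251) / 252,
    (252 * ((r % 84480 % 4830 + 251) / 252) - r % 84480 % 4830) / 24,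
    (252 * ((r % 84480 % 4830 + 251) / 252) - r % 84480 % 4830) % 24, ?_⟩
  omega
end

section
/- Let p be a prime and let X, Y be subsets of Z/pZ with |X|·|Y| > 2p. Then every element of Z/pZ can be written as x₁y₁ + x₂y₂ + ... + x₈y₈ with xᵢ ∈ X and yᵢ ∈ Y. -/
/-!
Split `Y` into its symmetric part `Y ∩ -Y` and its antisymmetric part `Y \ -Y`; for one of them,
`B`, still `p < |X| |B|`. Averaging the additive energy of `w • X` and `B` over `w ≠ 0` and applying
Cauchy–Schwarz yields a `w ≠ 0` with `|w • X ± B| > p / 2`. If moreover `w = s / t` with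
`s • X ⊆ XB + XB` and `t • B ⊆ XB + XB`, then `t • (w • X + B) = s • X + t • B` is a set of more
than `p / 2` elements of `4 • XY`, so two copies of it cover the field. Such a ratio exists: for
symmetric `B`, since `p < |X| |B|`, the map `(x, b) ↦ w x - b` has a collision, giving
`w = (b₁ - b₂) / (x₁ - x₂)`; for antisymmetric `B`, `0` is a sum of two elements of `w • X - B`,
giving `w = (b₁ + b₂) / (x₁ + x₂)` with nonzero numerator.
-/

open Finset Pointwise Function
open scoped Combinatorics.Additive

section AddCommGroup
variable {G : Type*} [AddCommGroup G] [DecidableEq G]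

lemma add_eq_univ_of_card_lt [Fintype G] {s t : Finset G} (h : Fintype.card G < #s + #t) :
    s + t = univ := by
  refine eq_univ_of_forall fun z => ?_
  obtain ⟨u, hu⟩ := inter_nonempty_of_card_lt_card_add_card (subset_univ s)
    (subset_univ (t.image (z - ·)))
    (by rwa [card_univ, card_image_of_injective _ sub_right_injective])
  obtain ⟨hus, v, hv, rfl⟩ : u ∈ s ∧ ∃ v ∈ t, z - v = u := by simpa using hu
  simpa using add_mem_add hus hv

lemma addEnergy_neg_right (s t : Finset G) : E[s, -t] = E[s, t] := by
  refine card_nbij' (fun x => (x.1, -x.2.2, -x.2.1)) (fun x => (x.1, -x.2.2, -x.2.1)) ?_ ?_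
    (fun _ _ => by simp) (fun _ _ => by simp) <;>
  · rintro ⟨⟨a₁, a₂⟩, b₁, b₂⟩
    simp [← sub_eq_add_neg, sub_eq_sub_iff_add_eq_add]
    tauto

lemma addEnergy_eq_sum_card_filter (s t : Finset G) :
    E[s, t] = ∑ a ∈ s ×ˢ s, #{b ∈ t ×ˢ t | a.1 - a.2 = b.2 - b.1} := by
  simp only [addEnergy, card_filter, sum_product, sub_eq_sub_iff_add_eq_add, add_comm _ (_ : G)]

lemma addEnergy_image_left {α : Type*} [DecidableEq α] {f : α → G} (hf : Injective f)
    (s : Finset α) (t : Finset G) :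
    E[s.image f, t] = ∑ a ∈ s ×ˢ s, #{b ∈ t ×ˢ t | f a.1 - f a.2 = b.2 - b.1} := by
  rw [addEnergy_eq_sum_card_filter, ← prodMap_image_product, sum_image (hf.prodMap hf).injOn]
  rfl

end AddCommGroup

lemma exists_sum_mul_eq_of_mem_nsmul_mul {R : Type*} [AddCommMonoid R] [Mul R] [DecidableEq R]
    {n : ℕ} {X Y : Finset R} {z : R} (hz : z ∈ n • (X * Y)) :
    ∃ x y : Fin n → R, (∀ i, x i ∈ X) ∧ (∀ i, y i ∈ Y) ∧ ∑ i, x i * y i = z := by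
  rw [← mem_coe, coe_nsmul, Set.mem_nsmul_iff_sum] at hz
  obtain ⟨f, hf, rfl⟩ := hz
  choose x hx y hy hxy using fun i => mem_mul.1 (hf i)
  exact ⟨x, y, hx, hy, by simp only [hxy]⟩

lemma lt_two_mul_of_energy_le {q m n k e : ℕ} (hq : 2 ≤ q) (hm : m ≤ q) (hmn : q < m * n)
    (he : (q - 1) * e ≤ (q - 1) * (m * n) + (m * m - m) * n ^ 2) (hk : (m * n) ^ 2 ≤ k * e) :
    q < 2 * k := by
  have hn : 2 ≤ n := by
    by_contra! h
    interval_cases n <;> nlinarith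
  by_contra! hkq
  zify [Nat.le_mul_self m, (by omega : 1 ≤ q)] at he hk hkq hmn hq hn
  set N : ℤ := m * n
  have he' : ((q : ℤ) - 1) * e ≤ (q - 1) * N + (N ^ 2 - N * n) := by
    convert he using 2; ring
  have h1 : 2 * N ^ 2 ≤ q * e := by nlinarith
  have h2 : N * (2 * (q - 1) * N) ≤ N * (q * (q - 1) + q * N - q * n) := by nlinarith
  have h3 := le_of_mul_le_mul_left h2 (by omega)
  nlinarith

section Field
variable {F : Type*} [Field F] [DecidableEq F]

lemma addEnergy_smul_left {w : F} (hw : w ≠ 0) (A B : Finset F) :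
    E[w • A, B] = ∑ a ∈ A ×ˢ A, #{b ∈ B ×ˢ B | w * (a.1 - a.2) = b.2 - b.1} := by
  simp only [smul_finset_def, addEnergy_image_left (mul_right_injective₀ hw), smul_eq_mul, mul_sub]

variable [Fintype F]

lemma sum_card_filter_mul_sub_eq_sub_le (a₁ a₂ : F) (B : Finset F) :
    ∑ w ∈ univ.erase (0 : F), #{b ∈ B ×ˢ B | w * (a₁ - a₂) = b.2 - b.1} ≤
      if a₁ = a₂ then (Fintype.card F - 1) * #B else #B ^ 2 := by
  split_ifs with h
  · have hdiag : ∀ w : F, #{b ∈ B ×ˢ B | w * (a₁ - a₂) = b.2 - b.1} = #B := fun w => by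
      simp [h, sub_eq_zero, eq_comm, ← diag_eq_filter]
    simp [hdiag, card_erase_of_mem]
  · have hd : a₁ - a₂ ≠ 0 := sub_ne_zero.2 h
    calc ∑ w ∈ univ.erase (0 : F), #{b ∈ B ×ˢ B | w * (a₁ - a₂) = b.2 - b.1}
        = ∑ w ∈ univ.erase (0 : F), #{b ∈ B ×ˢ B | (b.2 - b.1) / (a₁ - a₂) = w} := by
          simp only [div_eq_iff hd, eq_comm]
      _ ≤ #(B ×ˢ B) := by
          rw [sum_card_fiberwise_eq_card_filter]
          exact card_filter_le _ _
      _ = #B ^ 2 := by rw [card_product, sq]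

lemma sum_addEnergy_smul_le (A B : Finset F) :
    ∑ w ∈ univ.erase (0 : F), E[w • A, B] ≤
      (Fintype.card F - 1) * (#A * #B) + (#A * #A - #A) * #B ^ 2 := by
  have hoff : #{a ∈ A ×ˢ A | ¬a.1 = a.2} = #A * #A - #A := by
    have := card_filter_add_card_filter_not (s := A ×ˢ A) (fun a => a.1 = a.2)
    rw [← diag_eq_filter, diag_card, card_product] at this
    omega
  calc ∑ w ∈ univ.erase (0 : F), E[w • A, B]
      = ∑ a ∈ A ×ˢ A, ∑ w ∈ univ.erase (0 : F), #{b ∈ B ×ˢ B | w * (a.1 - a.2) = b.2 - b.1} := by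
        rw [sum_comm]
        exact sum_congr rfl fun w hw => addEnergy_smul_left (ne_of_mem_erase hw) A B
    _ ≤ ∑ a ∈ A ×ˢ A, if a.1 = a.2 then (Fintype.card F - 1) * #B else #B ^ 2 :=
        sum_le_sum fun a _ => sum_card_filter_mul_sub_eq_sub_le a.1 a.2 B
    _ = (Fintype.card F - 1) * (#A * #B) + (#A * #A - #A) * #B ^ 2 := by
        rw [sum_ite, sum_const, sum_const, ← diag_eq_filter, diag_card, hoff, smul_eq_mul,
          smul_eq_mul]
        ring

lemma exists_smul_add_card_gt_half {A B : Finset F} (hAB : Fintype.card F < #A * #B) :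
    ∃ w ≠ (0 : F), Fintype.card F < 2 * #(w • A + B) ∧ Fintype.card F < 2 * #(w • A + -B) := by
  obtain ⟨w, hw, hmin⟩ := exists_min_image (univ.erase (0 : F)) (fun w => E[w • A, B])
    ⟨1, by simp⟩
  have hw0 : w ≠ 0 := ne_of_mem_erase hw
  have he : (Fintype.card F - 1) * E[w • A, B] ≤
      (Fintype.card F - 1) * (#A * #B) + (#A * #A - #A) * #B ^ 2 := by
    have := card_nsmul_le_sum _ _ _ hmin
    rw [card_erase_of_mem (mem_univ _), card_univ, smul_eq_mul] at this
    exact this.trans (sum_addEnergy_smul_le A B)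
  have large : ∀ C : Finset F, #C = #B → E[w • A, C] = E[w • A, B] →
      Fintype.card F < 2 * #(w • A + C) := fun C hC hE => by
    refine lt_two_mul_of_energy_le Fintype.one_lt_card (card_le_univ A) hAB he ?_
    have := le_card_add_mul_addEnergy (w • A) C
    rwa [card_smul_finset₀ hw0, hC, hE, ← mul_pow] at this
  exact ⟨w, hw0, large B rfl rfl, large (-B) (card_neg B) (addEnergy_neg_right _ B)⟩

lemma eight_nsmul_mul_eq_univ_of_smul_add {A B : Finset F} {w t : F}
    (hlarge : Fintype.card F < 2 * #(w • A + B)) (ht : t ≠ 0)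
    (hA : ∀ a ∈ A, t * w * a ∈ A * B + A * B) (hB : ∀ b ∈ B, t * b ∈ A * B + A * B) :
    8 • (A * B) = univ := by
  have hcover : t • (w • A + B) + t • (w • A + B) = univ :=
    add_eq_univ_of_card_lt (by rw [card_smul_finset₀ ht]; omega)
  have hsub : t • (w • A + B) ⊆ 4 • (A * B) := by
    rw [smul_add, smul_smul, show 4 = 2 + 2 from rfl, add_nsmul, two_nsmul]
    refine add_subset_add ?_ ?_ <;> intro x hx <;> obtain ⟨y, hy, rfl⟩ := mem_smul_finset.1 hx
    exacts [hA y hy, hB y hy]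
  rw [← univ_subset_iff, ← hcover, show 8 = 4 + 4 from rfl, add_nsmul]
  exact add_subset_add hsub hsub

lemma eight_nsmul_mul_eq_univ_of_neg_eq {A B : Finset F} (hB : -B = B)
    (hAB : Fintype.card F < #A * #B) : 8 • (A * B) = univ := by
  have hneg : ∀ {b}, b ∈ B → -b ∈ B := fun hb => hB ▸ neg_mem_neg hb
  obtain ⟨w, -, hlarge, -⟩ := exists_smul_add_card_gt_half hAB
  obtain ⟨⟨a₁, b₁⟩, h₁, ⟨a₂, b₂⟩, h₂, hne, heq⟩ := exists_ne_map_eq_of_card_lt_of_maps_to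
    (s := A ×ˢ B) (t := univ) (f := fun p => w * p.1 - p.2) (by simpa [card_product] using hAB)
    (fun _ _ => mem_univ _)
  simp only [mem_product] at h₁ h₂
  have ht : a₁ - a₂ ≠ 0 := by
    refine sub_ne_zero.2 fun ha => hne ?_
    subst ha
    simp_all
  refine eight_nsmul_mul_eq_univ_of_smul_add hlarge ht (fun a ha => ?_) (fun b hb => ?_)
  · rw [show (a₁ - a₂) * w * a = a * b₁ + a * -b₂ by linear_combination a * heq]
    exact add_mem_add (mul_mem_mul ha h₁.2) (mul_mem_mul ha (hneg h₂.2))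
  · rw [show (a₁ - a₂) * b = a₁ * b + a₂ * -b by ring]
    exact add_mem_add (mul_mem_mul h₁.1 hb) (mul_mem_mul h₂.1 (hneg hb))

lemma eight_nsmul_mul_eq_univ_of_disjoint_neg {A B : Finset F} (hB : Disjoint B (-B))
    (hAB : Fintype.card F < #A * #B) : 8 • (A * B) = univ := by
  obtain ⟨w, -, hlarge, hlarge'⟩ := exists_smul_add_card_gt_half hAB
  have h0 : (0 : F) ∈ (w • A + -B) + (w • A + -B) := by
    rw [add_eq_univ_of_card_lt (by omega)]
    exact mem_univ 0
  simp only [mem_add, mem_smul_finset, mem_neg, smul_eq_mul] at h0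
  obtain ⟨_, ⟨_, ⟨a₁, h₁, rfl⟩, _, ⟨b₁, hb₁, rfl⟩, rfl⟩,
    _, ⟨_, ⟨a₂, h₂, rfl⟩, _, ⟨b₂, hb₂, rfl⟩, rfl⟩, heq⟩ := h0
  have hs : b₁ + b₂ ≠ 0 := fun h => disjoint_left.1 hB hb₁
    (mem_neg.2 ⟨b₂, hb₂, by linear_combination -h⟩)
  have ht : a₁ + a₂ ≠ 0 := fun h => hs (by linear_combination -heq + w * h)
  refine eight_nsmul_mul_eq_univ_of_smul_add hlarge ht (fun a ha => ?_) (fun b hb => ?_)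
  · rw [show (a₁ + a₂) * w * a = a * b₁ + a * b₂ by linear_combination a * heq]
    exact add_mem_add (mul_mem_mul ha hb₁) (mul_mem_mul ha hb₂)
  · rw [add_mul]
    exact add_mem_add (mul_mem_mul h₁ hb) (mul_mem_mul h₂ hb)

theorem eight_nsmul_mul_eq_univ {X Y : Finset F} (hXY : 2 * Fintype.card F < #X * #Y) :
    8 • (X * Y) = univ := by
  have hsplit := card_inter_add_card_sdiff Y (-Y)
  rcases le_total #(Y \ -Y) #(Y ∩ -Y) with h | h
  · have hsymm : -(Y ∩ -Y) = Y ∩ -Y := by rw [neg_inter, neg_neg, inter_comm]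
    have := eight_nsmul_mul_eq_univ_of_neg_eq (A := X) hsymm (by nlinarith)
    exact univ_subset_iff.1 (this ▸ nsmul_subset_nsmul_left (mul_subset_mul_left inter_subset_left))
  · have hdisj : Disjoint (Y \ -Y) (-(Y \ -Y)) := by
      rw [disjoint_left]
      intro b hb hb'
      simp_all
    have := eight_nsmul_mul_eq_univ_of_disjoint_neg (A := X) hdisj (by nlinarith)
    exact univ_subset_iff.1 (this ▸ nsmul_subset_nsmul_left (mul_subset_mul_left sdiff_subset))

end Field

theorem glibichuk (p : ℕ) (hp : p.Prime) (X Y : Finset (ZMod p))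
    (hXY : 2 * p < X.card * Y.card) (z : ZMod p) :
    ∃ x y : Fin 8 → ZMod p, (∀ i, x i ∈ X) ∧ (∀ i, y i ∈ Y) ∧
      ∑ i, x i * y i = z := by
  have : Fact p.Prime := ⟨hp⟩
  have hcover := eight_nsmul_mul_eq_univ (X := X) (Y := Y) (by rwa [ZMod.card])
  exact exists_sum_mul_eq_of_mem_nsmul_mul (hcover ▸ mem_univ z)
end

section
/- Every residue class r modulo 370944 has a representative in [0, 370944) expressible as a sum of exactly 198 values τ(aᵢ) with 1 ≤ aᵢ ≤ 105: there exist positive integers a₁,...,a₁₉₈ ≤ 105 with ∑_{i=1}^{198} τ(aᵢ) ≡ r (mod 370944). -/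
/-- The Ramanujan tau function: the coefficient of `X^n` in
`X * ∏_{k=1}^{n} (1 - X^k)^24` (factors with `k > n` do not affect this coefficient). -/
noncomputable def ramanujanTau (n : ℕ) : ℤ :=
  (Polynomial.X * ∏ k ∈ Finset.Icc 1 n, ((1 : Polynomial ℤ) - Polynomial.X ^ k) ^ 24).coeff n

/-!
Since `τ 12 = -370944`, padding with copies of `τ 12` does not change a residue modulo `370944`,
so it suffices to write each `0 ≤ m < 370944` as a sum of at most `75` of the values
`τ 1, τ 2, τ 3, τ 5, τ 8 = 1, -24, 252, 4830, 84480`. These six values of `τ` are evaluated by the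
kernel on truncated coefficient lists of `∏ (1 - X ^ k) ^ 24`, one factor `1 - X ^ k` at a time.
-/

open Polynomial

section CoeffPrefix

variable {R : Type*} [CommRing R]

def CoeffPrefix (p : R[X]) (l : List R) : Prop :=
  ∀ i (hi : i < l.length), p.coeff i = l[i]

def mulOneSubXPowCoeffs (k : ℕ) (l : List R) : List R :=
  List.zipWith (· - ·) l (List.replicate k 0 ++ l)

@[simp]
theorem length_mulOneSubXPowCoeffs (k : ℕ) (l : List R) :
    (mulOneSubXPowCoeffs k l).length = l.length := by
  simp [mulOneSubXPowCoeffs]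

theorem CoeffPrefix.one_sub_X_pow_mul {p : R[X]} {l : List R} (h : CoeffPrefix p l) (k : ℕ) :
    CoeffPrefix ((1 - X ^ k) * p) (mulOneSubXPowCoeffs k l) := by
  intro i hi
  rw [length_mulOneSubXPowCoeffs] at hi
  simp only [mulOneSubXPowCoeffs, List.getElem_zipWith, sub_mul, one_mul, coeff_sub,
    coeff_X_pow_mul', h i hi, List.getElem_append, List.length_replicate]
  split_ifs with hki hik hik
  · omega
  · rw [h (i - k) (by omega)]
  · simp
  · omega

theorem CoeffPrefix.one_sub_X_pow_pow_mul {p : R[X]} {l : List R} (h : CoeffPrefix p l)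
    (k e : ℕ) : CoeffPrefix ((1 - X ^ k) ^ e * p) ((mulOneSubXPowCoeffs k)^[e] l) := by
  induction e with
  | zero => simpa using h
  | succ e ih =>
    rw [Function.iterate_succ_apply', pow_succ', mul_assoc]
    exact ih.one_sub_X_pow_mul k

variable (R) in
def prodOneSubXPowCoeffs (N e : ℕ) : ℕ → List R
  | 0 => 1 :: List.replicate N 0
  | n + 1 => (mulOneSubXPowCoeffs (n + 1))^[e] (prodOneSubXPowCoeffs N e n)

theorem length_prodOneSubXPowCoeffs (N e n : ℕ) :
    (prodOneSubXPowCoeffs R N e n).length = N + 1 := by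
  induction n with
  | zero => simp [prodOneSubXPowCoeffs]
  | succ n ih =>
    rw [prodOneSubXPowCoeffs, ← ih]
    exact congrFun (Function.iterate_invariant (funext (length_mulOneSubXPowCoeffs _)) e) _

theorem coeffPrefix_prod_one_sub_X_pow (N e n : ℕ) :
    CoeffPrefix (∏ k ∈ Finset.Icc 1 n, (1 - X ^ k : R[X]) ^ e) (prodOneSubXPowCoeffs R N e n) := by
  induction n with
  | zero =>
    rintro (_ | i) hi
    · simp [prodOneSubXPowCoeffs]
    · simp [prodOneSubXPowCoeffs, coeff_one]
  | succ n ih =>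
    rw [Finset.prod_Icc_succ_top (by omega), mul_comm]
    exact ih.one_sub_X_pow_pow_mul (n + 1) e

end CoeffPrefix

theorem ramanujanTau_succ (n : ℕ) :
    ramanujanTau (n + 1) = (prodOneSubXPowCoeffs ℤ n 24 (n + 1)).getD n 0 := by
  rw [ramanujanTau, coeff_X_mul, List.getD_eq_getElem _ _ (by simp [length_prodOneSubXPowCoeffs]),
    coeffPrefix_prod_one_sub_X_pow]

theorem ramanujanTau_one : ramanujanTau 1 = 1 := by rw [ramanujanTau_succ]; decide +kernel
theorem ramanujanTau_two : ramanujanTau 2 = -24 := by rw [ramanujanTau_succ]; decide +kernel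
theorem ramanujanTau_three : ramanujanTau 3 = 252 := by rw [ramanujanTau_succ]; decide +kernel
theorem ramanujanTau_five : ramanujanTau 5 = 4830 := by rw [ramanujanTau_succ]; decide +kernel
theorem ramanujanTau_eight : ramanujanTau 8 = 84480 := by rw [ramanujanTau_succ]; decide +kernel
theorem ramanujanTau_twelve : ramanujanTau 12 = -370944 := by rw [ramanujanTau_succ]; decide +kernel

/- Greedy in `84480, 4830, 252` with one extra `252`; the overshoot `o ∈ [1, 252]` is paid back as
`o = 24 * ⌈o / 24⌉ - (24 * ⌈o / 24⌉ - o)` with copies of `-24` and `1`. -/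
theorem exists_tau_counts (m : ℕ) (hm : m < 370944) :
    ∃ c₁ c₂ c₃ c₅ c₈ : ℕ, c₁ + c₂ + c₃ + c₅ + c₈ ≤ 75 ∧
      (c₁ : ℤ) - 24 * c₂ + 252 * c₃ + 4830 * c₅ + 84480 * c₈ = m := by
  set r := m % 84480 % 4830
  set o := 252 * (r / 252 + 1) - r
  exact ⟨24 * ((o + 23) / 24) - o, (o + 23) / 24, r / 252 + 1, m % 84480 / 4830, m / 84480,
    by omega, by omega⟩

theorem exists_list_tau_sum_eq (m : ℕ) (hm : m < 370944) :
    ∃ l : List ℕ, l.length ≤ 75 ∧ (∀ x ∈ l, 1 ≤ x ∧ x ≤ 8) ∧ (l.map ramanujanTau).sum = m := by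
  obtain ⟨c₁, c₂, c₃, c₅, c₈, hc, hsum⟩ := exists_tau_counts m hm
  refine ⟨.replicate c₁ 1 ++ .replicate c₂ 2 ++ .replicate c₃ 3 ++ .replicate c₅ 5 ++
    .replicate c₈ 8, by simp; omega, ?_, ?_⟩
  · simp only [List.mem_append, List.mem_replicate]
    omega
  · simp only [List.map_append, List.map_replicate, List.sum_append, List.sum_replicate,
      nsmul_eq_mul, ramanujanTau_one, ramanujanTau_two, ramanujanTau_three, ramanujanTau_five,
      ramanujanTau_eight]
    linarith

theorem List.exists_fin_sum_eq {α β : Type*} [AddCommMonoid β] (f : α → β) (l : List α) {n : ℕ}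
    (hn : l.length = n) : ∃ a : Fin n → α, (∀ i, a i ∈ l) ∧ ∑ i, f (a i) = (l.map f).sum := by
  subst hn
  exact ⟨fun i => l[i.1], fun i => List.getElem_mem i.2, Fin.sum_univ_fun_getElem l f⟩

theorem exists_fin_sum_modEq_of_list {α : Type*} (f : α → ℤ) {M : ℤ} {z : α}
    (hz : f z ≡ 0 [ZMOD M]) (l : List α) {n : ℕ} (hn : l.length ≤ n) :
    ∃ a : Fin n → α, (∀ i, a i ∈ l ∨ a i = z) ∧ ∑ i, f (a i) ≡ (l.map f).sum [ZMOD M] := by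
  obtain ⟨a, ha, hsum⟩ := (l ++ List.replicate (n - l.length) z).exists_fin_sum_eq f (n := n)
    (by simp; omega)
  refine ⟨a, fun i => (List.mem_append.1 (ha i)).imp_right List.eq_of_mem_replicate, ?_⟩
  calc ∑ i, f (a i) = (l.map f).sum + (n - l.length : ℕ) * f z := by simp [hsum]
    _ ≡ (l.map f).sum + (n - l.length : ℕ) * 0 [ZMOD M] := (hz.mul_left _).add_left _
    _ = (l.map f).sum := by simp

theorem residue_as_198_tau_values (r : ℤ) :
    ∃ a : Fin 198 → ℕ, (∀ i, 1 ≤ a i ∧ a i ≤ 105) ∧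
      (∑ i, ramanujanTau (a i)) ≡ r [ZMOD 370944] := by
  have hr : 0 ≤ r % 370944 := Int.emod_nonneg r (by norm_num)
  obtain ⟨l, hlen, hl, hsum⟩ := exists_list_tau_sum_eq (r % 370944).toNat (by omega)
  have h12 : ramanujanTau 12 ≡ 0 [ZMOD 370944] := by rw [ramanujanTau_twelve]; decide
  obtain ⟨a, ha, hasum⟩ := exists_fin_sum_modEq_of_list ramanujanTau h12 l (n := 198) (by omega)
  refine ⟨a, fun i => ?_, ?_⟩
  · rcases ha i with h | h
    · have := hl _ h
      omega
    · omega
  · calc ∑ i, ramanujanTau (a i) ≡ (l.map ramanujanTau).sum [ZMOD 370944] := hasum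
      _ = r % 370944 := by rw [hsum, Int.toNat_of_nonneg hr]
      _ ≡ r [ZMOD 370944] := Int.mod_modEq r _
end
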